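/- arXiv:math/9606227 — 5 statements merged into one kernel-verified Lean document; each statement's English description precedes it below -/
import Mathlib

section
/- Let λ be a nonempty index set and κ a cardinal. If there exists a family of κ dense open subsets of P_λ whose intersection is not dense in P_λ, then there exists a family of κ dense open subsets of P_λ whose intersection is empty. -/
open Set

/-- A condition in the full product `(P(ω)/fin)^ι`: a function assigning an
infinite subset of `ℕ` to every index. -/
def PCond (ι : Type*) : Type _ :=
  {p : ι → Set ℕ // ∀ α, (p α).Infinite}

/-- `q ≤ p` iff `q α` is almost contained in `p α` (i.e. `q α \ p α` is finite)
for every index `α`. -/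
instance (ι : Type*) : Preorder (PCond ι) where
  le q p := ∀ α, ((q.1 α) \ (p.1 α)).Finite
  le_refl p := fun α => by simp
  le_trans a b c hab hbc := fun α =>
    ((hab α).union (hbc α)).subset (fun x hx => by
      by_cases hb : x ∈ b.1 α
      · exact Or.inr ⟨hb, hx.2⟩
      · exact Or.inl ⟨hx.1, hb⟩)

/-- A set of conditions is open iff it is downward closed. -/
def OpenIn {P : Type*} [Preorder P] (D : Set P) : Prop :=
  ∀ p ∈ D, ∀ q, q ≤ p → q ∈ D

/-- A set of conditions is dense iff every condition has an extension in it. -/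
def DenseIn {P : Type*} [Preorder P] (D : Set P) : Prop :=
  ∀ p, ∃ q ∈ D, q ≤ p

/-! Let `p` have no extension in `⋂ a, D a`, and choose injections `f α : ℕ → ℕ` with range inside
`p α`. Transporting conditions along the `f α` is monotone, lands below `p`, and every extension of
a transported condition contains, up to extension, the transport of an extension. So the pullbacks
of the `D a` along this map are still dense open, and a condition in all of them would be sent to
an extension of `p` lying in `⋂ a, D a`. -/

theorem iInter_preimage_eq_empty {P Q I : Type*} [Preorder Q] {F : P → Q} {D : I → Set Q} {p : Q}
    (hp : ∀ q ∈ ⋂ a, D a, ¬ q ≤ p) (hFp : ∀ q, F q ≤ p) : ⋂ a, F ⁻¹' D a = ∅ := by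
  refine eq_empty_iff_forall_notMem.2 fun q hq => hp (F q) ?_ (hFp q)
  rwa [← preimage_iInter] at hq

section Transfer

variable {P Q : Type*} [Preorder P] [Preorder Q] {F : P → Q}

theorem OpenIn.preimage (hF : Monotone F) {D : Set Q} (hD : OpenIn D) : OpenIn (F ⁻¹' D) :=
  fun q hq r hrq => hD (F q) hq (F r) (hF hrq)

theorem DenseIn.preimage (hF : ∀ q r, r ≤ F q → ∃ s ≤ q, F s ≤ r) {D : Set Q}
    (hDo : OpenIn D) (hDd : DenseIn D) : DenseIn (F ⁻¹' D) := by
  intro q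
  obtain ⟨r, hrD, hrq⟩ := hDd (F q)
  obtain ⟨s, hsq, hsr⟩ := hF q r hrq
  exact ⟨s, hDo r hrD (F s) hsr, hsq⟩

end Transfer

namespace PCond

variable {ι : Type*} {f : ι → ℕ → ℕ} (hf : ∀ α, Function.Injective (f α))

def image (q : PCond ι) : PCond ι :=
  ⟨fun α => f α '' q.1 α, fun α => (q.2 α).image (hf α).injOn⟩

theorem image_apply (q : PCond ι) (α : ι) : (image hf q).1 α = f α '' q.1 α := rfl

theorem image_mono : Monotone (image hf) := fun q r hqr α => by
  simp only [image_apply, ← image_sdiff (hf α)]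
  exact (hqr α).image _

theorem exists_image_le {q r : PCond ι} (hrq : r ≤ image hf q) : ∃ s ≤ q, image hf s ≤ r := by
  have hs : ∀ α, (f α ⁻¹' r.1 α).Infinite := fun α => by
    refine Infinite.of_image (f α) ?_
    rw [image_preimage_eq_inter_range]
    refine ((r.2 α).sdiff (hrq α)).mono ?_
    rintro x ⟨hx, hxq⟩
    obtain ⟨y, -, rfl⟩ : x ∈ f α '' q.1 α := by_contra fun hxq' => hxq ⟨hx, hxq'⟩
    exact ⟨hx, y, rfl⟩
  refine ⟨⟨fun α => f α ⁻¹' r.1 α, hs⟩, fun α => ?_, fun α => ?_⟩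
  · have hdiff := (hrq α).preimage (hf α).injOn
    rwa [preimage_sdiff, image_apply, preimage_image_eq _ (hf α)] at hdiff
  · show (f α '' (f α ⁻¹' r.1 α) \ r.1 α).Finite
    simp only [image_preimage_eq_inter_range, sdiff_eq_empty.2 inter_subset_left, finite_empty]

theorem image_le {p : PCond ι} (hfp : ∀ α, range (f α) ⊆ p.1 α) (q : PCond ι) :
    image hf q ≤ p := fun α => by
  simp only [image_apply, sdiff_eq_empty.2 ((image_subset_range _ _).trans (hfp α)), finite_empty]

end PCond

theorem exists_family_empty_inter_general {ι : Type} (κ : Cardinal)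
    (h : ∃ (I : Type) (D : I → Set (PCond ι)),
      Cardinal.mk I = κ ∧ (∀ a, OpenIn (D a) ∧ DenseIn (D a)) ∧
        ¬ DenseIn (⋂ a, D a)) :
    ∃ (I : Type) (D : I → Set (PCond ι)),
      Cardinal.mk I = κ ∧ (∀ a, OpenIn (D a) ∧ DenseIn (D a)) ∧
        (⋂ a, D a) = ∅ := by
  obtain ⟨I, D, hI, hD, hnd⟩ := h
  obtain ⟨p, hp⟩ : ∃ p : PCond ι, ∀ q ∈ ⋂ a, D a, ¬ q ≤ p := by
    simpa [DenseIn] using hnd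
  let f : ι → ℕ → ℕ := fun α n => (p.2 α).natEmbedding _ n
  have hf : ∀ α, Function.Injective (f α) := fun α =>
    Subtype.val_injective.comp ((p.2 α).natEmbedding _).injective
  have hfp : ∀ α, range (f α) ⊆ p.1 α := fun α => by
    rintro _ ⟨n, rfl⟩
    exact ((p.2 α).natEmbedding _ n).2
  refine ⟨I, fun a => PCond.image hf ⁻¹' D a, hI, fun a => ⟨?_, ?_⟩, ?_⟩
  · exact (hD a).1.preimage (PCond.image_mono hf)
  · exact DenseIn.preimage (fun _ _ => PCond.exists_image_le hf) (hD a).1 (hD a).2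
  · exact iInter_preimage_eq_empty hp (PCond.image_le hf hfp)

/-- If there is a family of `κ` dense open subsets of `P_λ` whose intersection is
not dense, then there is such a family whose intersection is empty. -/
theorem exists_family_empty_inter {ι : Type} [Nonempty ι] (κ : Cardinal)
    (h : ∃ (I : Type) (D : I → Set (PCond ι)),
      Cardinal.mk I = κ ∧ (∀ a, OpenIn (D a) ∧ DenseIn (D a)) ∧
        ¬ DenseIn (⋂ a, D a)) :
    ∃ (I : Type) (D : I → Set (PCond ι)),
      Cardinal.mk I = κ ∧ (∀ a, OpenIn (D a) ∧ DenseIn (D a)) ∧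
        (⋂ a, D a) = ∅ :=
  exists_family_empty_inter_general κ h
end

section
/- Let λ be a nonempty index set and κ a cardinal. If player II has a winning strategy in the game G(P_λ, κ), then there exists a family of at most κ maximal antichains of P_λ which has no common refinement, i.e. no maximal antichain of P_λ refines every member of the family. -/
open Set

/-- A strategy for player II in the game `G(P, κ)`.  `move β pI pII` is II's reply
at stage `β`, given player I's moves `pI γ` for `γ ≤ β` and II's own earlier moves
`pII γ` for `γ < β`; the field `depends_only_on_past` states that the reply only
depends on this part of the position. -/
structure IIStrategy (P : Type*) where
  move : Ordinal.{0} → (Ordinal.{0} → P) → (Ordinal.{0} → P) → P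
  depends_only_on_past : ∀ (β : Ordinal.{0}) (pI pII pI' pII' : Ordinal.{0} → P),
    (∀ γ ≤ β, pI γ = pI' γ) → (∀ γ < β, pII γ = pII' γ) →
    move β pI pII = move β pI' pII'

/-- `pI, pII` describe a legal position of the game before stage `β` in which
player II has followed `σ`: at every earlier stage `γ < β`, player I's move
`pI γ` extends all previous moves, player II's move `pII γ` extends `pI γ`,
and `pII γ` is the move dictated by `σ`. -/
def IsPosition {P : Type*} [Preorder P] (σ : IIStrategy P) (β : Ordinal)
    (pI pII : Ordinal → P) : Prop :=
  ∀ γ < β, (∀ δ < γ, pI γ ≤ pII δ) ∧ pII γ ≤ pI γ ∧ pII γ = σ.move γ pI pII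

/-- `pI, pII` is a complete legal run of the game of length `κ` in which player II
follows the strategy `σ`. -/
def IsRun {P : Type*} [Preorder P] (κ : Ordinal) (σ : IIStrategy P)
    (pI pII : Ordinal → P) : Prop :=
  ∀ β < κ, (∀ γ < β, pI β ≤ pII γ) ∧ pII β ≤ pI β ∧ pII β = σ.move β pI pII

/-- The strategy `σ` replies legally at every reachable position of the game of
length `κ`. -/
def LegalStrategy {P : Type*} [Preorder P] (κ : Ordinal) (σ : IIStrategy P) : Prop :=
  ∀ β < κ, ∀ pI pII : Ordinal → P, IsPosition σ β pI pII →
    (∀ γ < β, pI β ≤ pII γ) → σ.move β pI pII ≤ pI β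

/-- `σ` is a winning strategy for player II in the game `G(P, κ)`: it always
replies legally, and every complete legal run of length `κ` in which II follows
`σ` produces a sequence of moves with no lower bound. -/
def WinningForII {P : Type*} [Preorder P] (κ : Ordinal) (σ : IIStrategy P) : Prop :=
  LegalStrategy κ σ ∧
    ∀ pI pII : Ordinal → P, IsRun κ σ pI pII → ¬ ∃ q : P, ∀ β < κ, q ≤ pII β

/-- Two conditions are compatible iff they have a common extension. -/
def Compat {P : Type*} [Preorder P] (p q : P) : Prop :=
  ∃ r, r ≤ p ∧ r ≤ q

/-- A maximal antichain: a set of pairwise incompatible conditions such that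
every condition is compatible with some member. -/
def MaxAntichain {P : Type*} [Preorder P] (A : Set P) : Prop :=
  (∀ p ∈ A, ∀ q ∈ A, p ≠ q → ¬ Compat p q) ∧ ∀ p, ∃ a ∈ A, Compat p a

/-- `B` refines `A` iff every member of `B` extends some member of `A`. -/
def RefinesAC {P : Type*} [Preorder P] (B A : Set P) : Prop :=
  ∀ b ∈ B, ∃ a ∈ A, b ≤ a

/-!
Suppose every family of at most `κ` maximal antichains has a common refinement, and let `σ`
be a strategy for II. By transfinite recursion over `β ≤ κ` we build a tree of partial plays
against `σ`: level `β` is a maximal antichain `A β` refining all earlier levels, and every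
`a ∈ A β` determines a play of length `β` in which II follows `σ` and all of II's moves lie
above `a` (II's move at stage `δ` is the member of `A (δ + 1)` above `a`). At a successor
`γ + 1`, each `a ∈ A γ` is split into a maximal antichain of answers of `σ` to moves of I
below `a`; these answers are dense below `a` since each extends the move it answers. At a
limit we take a common refinement of the earlier levels. A member of `A κ` is then a lower
bound of a complete run, so `σ` is not winning.
-/

open Function Order

section Ordinal

variable {α : Type*} [Nonempty α] (R : (Ordinal.{u} → α) → Ordinal.{u} → Prop)

open Classical in
noncomputable def choiceSeq (β : Ordinal.{u}) : α :=
  if h : ∃ x, R (update (fun γ => if _ : γ < β then choiceSeq γ else Classical.arbitrary α) β x) β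
  then h.choose else Classical.arbitrary α
termination_by β
decreasing_by assumption

theorem exists_forall_le_of_extend (k : Ordinal.{u})
    (hR : ∀ f g β, (∀ γ ≤ β, f γ = g γ) → R f β → R g β)
    (hext : ∀ β ≤ k, ∀ f, (∀ γ < β, R f γ) → ∃ x, R (update f β x) β) :
    ∃ f : Ordinal.{u} → α, ∀ β ≤ k, R f β := by
  classical
  refine ⟨choiceSeq R, fun β => ?_⟩
  induction β using WellFoundedLT.induction with
  | _ β ih =>
    intro hβ
    set f : Ordinal → α := fun γ => if γ < β then choiceSeq R γ else Classical.arbitrary α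
    have hf : ∀ γ < β, R f γ := fun γ hγ =>
      hR _ _ γ (fun δ hδ => by simp [f, hδ.trans_lt hγ]) (ih γ hγ (hγ.le.trans hβ))
    have hex := hext β hβ f hf
    have hβf : choiceSeq R β = hex.choose := by
      rw [choiceSeq, dif_pos (by simpa [f] using hex)]
    refine hR _ _ β (fun γ hγ => ?_) hex.choose_spec
    rcases hγ.lt_or_eq with hγ | rfl
    · simp [f, hγ, hγ.ne]
    · simp [hβf]

end Ordinal

section Antichain

variable {P : Type*} [Preorder P]

theorem Compat.refl (p : P) : Compat p p := ⟨p, le_rfl, le_rfl⟩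

theorem Compat.symm {p q : P} (h : Compat p q) : Compat q p :=
  let ⟨r, hrp, hrq⟩ := h; ⟨r, hrq, hrp⟩

theorem Compat.mono_left {p p' q : P} (h : Compat p q) (hp : p ≤ p') : Compat p' q :=
  let ⟨r, hrp, hrq⟩ := h; ⟨r, hrp.trans hp, hrq⟩

theorem MaxAntichain.eq_of_le {A : Set P} (hA : MaxAntichain A) {b c c' : P}
    (hc : c ∈ A) (hc' : c' ∈ A) (h : b ≤ c) (h' : b ≤ c') : c = c' := by
  by_contra hne
  exact hA.1 c hc c' hc' hne ⟨b, h, h'⟩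

theorem exists_pairwise_subset_forall_compat (D : Set P) :
    ∃ C ⊆ D, C.Pairwise (fun p q => ¬ Compat p q) ∧ ∀ q ∈ D, ∃ c ∈ C, Compat q c := by
  obtain ⟨C, hC⟩ := zorn_subset {C | C ⊆ D ∧ C.Pairwise (fun p q => ¬ Compat p q)}
    fun S hS hchain => ⟨⋃₀ S, ⟨sUnion_subset fun s hs => (hS hs).1,
      (pairwise_sUnion hchain.directedOn).2 fun s hs => (hS hs).2⟩,
      fun _ => subset_sUnion_of_mem⟩
  refine ⟨C, hC.prop.1, hC.prop.2, fun q hq => ?_⟩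
  by_contra! hinc
  have hins : insert q C ∈ {C | C ⊆ D ∧ C.Pairwise (fun p q => ¬ Compat p q)} :=
    ⟨insert_subset hq hC.prop.1,
      hC.prop.2.insert fun c hc _ => ⟨hinc c hc, fun h => hinc c hc h.symm⟩⟩
  have hqC : q ∈ C := (hC.eq_of_subset hins (subset_insert q C)) ▸ mem_insert q C
  exact hinc q hqC (Compat.refl q)

theorem MaxAntichain.biUnion {A : Set P} {C : P → Set P} (hA : MaxAntichain A)
    (hle : ∀ a ∈ A, ∀ c ∈ C a, c ≤ a)
    (hC : ∀ a ∈ A, (C a).Pairwise (fun p q => ¬ Compat p q))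
    (hmax : ∀ a ∈ A, ∀ p ≤ a, ∃ c ∈ C a, Compat p c) : MaxAntichain (⋃ a ∈ A, C a) := by
  refine ⟨?_, fun p => ?_⟩
  · simp only [mem_iUnion]
    rintro q ⟨a, ha, hq⟩ q' ⟨a', ha', hq'⟩ hne ⟨r, hrq, hrq'⟩
    rcases eq_or_ne a a' with rfl | haa
    · exact hC a ha hq hq' hne ⟨r, hrq, hrq'⟩
    · exact hA.1 a ha a' ha' haa
        ⟨r, hrq.trans (hle a ha q hq), hrq'.trans (hle a' ha' q' hq')⟩
  · obtain ⟨a, ha, r, hrp, hra⟩ := hA.2 p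
    obtain ⟨c, hc, hrc⟩ := hmax a ha r hra
    exact ⟨c, mem_biUnion ha hc, hrc.mono_left hrp⟩

end Antichain

section Game

variable {P : Type*} [Preorder P] {σ : IIStrategy P}

theorem IsPosition.congr {β : Ordinal} {pI pII pI' pII' : Ordinal → P}
    (h : IsPosition σ β pI pII) (hI : ∀ γ < β, pI γ = pI' γ)
    (hII : ∀ γ < β, pII γ = pII' γ) : IsPosition σ β pI' pII' := by
  intro γ hγ
  obtain ⟨hI_le, hII_le, hmove⟩ := h γ hγ
  refine ⟨fun δ hδ => ?_, ?_, ?_⟩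
  · rw [← hI γ hγ, ← hII δ (hδ.trans hγ)]; exact hI_le δ hδ
  · rw [← hI γ hγ, ← hII γ hγ]; exact hII_le
  · rw [← hII γ hγ, hmove]
    exact σ.depends_only_on_past γ _ _ _ _ (fun δ hδ => hI δ (hδ.trans_lt hγ))
      (fun δ hδ => hII δ (hδ.trans hγ))

theorem IsPosition.succ {γ : Ordinal} {pI pII : Ordinal → P} {p q : P}
    (h : IsPosition σ γ pI pII) (hp : ∀ δ < γ, p ≤ pII δ) (hqp : q ≤ p)
    (hq : q = σ.move γ (update pI γ p) pII) :
    IsPosition σ (γ + 1) (update pI γ p) (update pII γ q) := by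
  have hprev : IsPosition σ γ (update pI γ p) (update pII γ q) :=
    h.congr (fun δ hδ => (update_of_ne hδ.ne _ _).symm)
      (fun δ hδ => (update_of_ne hδ.ne _ _).symm)
  intro δ hδ
  rcases (lt_add_one_iff.1 hδ).lt_or_eq with hδ | rfl
  · exact hprev δ hδ
  refine ⟨fun ε hε => ?_, ?_, ?_⟩
  · rw [update_self, update_of_ne hε.ne]; exact hp ε hε
  · simpa only [update_self] using hqp
  · rw [update_self, hq]
    exact σ.depends_only_on_past δ _ _ _ _ (fun _ _ => rfl)
      (fun ε hε => (update_of_ne hε.ne _ _).symm)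

end Game

/-- A level of the tree of partial plays: a maximal antichain, and for each member `q` of
level `δ + 1` the move `moveI q` of player I that `q` answered at stage `δ`. -/
structure Level (P : Type*) where
  antichain : Set P
  moveI : P → P

instance {P : Type*} : Nonempty (Level P) := ⟨⟨∅, id⟩⟩

theorem MaxAntichain.exists_level_answers {P : Type*} [Preorder P] {A : Set P}
    (hA : MaxAntichain A) (reply : P → P → P) (hreply : ∀ a ∈ A, ∀ p ≤ a, reply a p ≤ p) :
    ∃ L : Level P, MaxAntichain L.antichain ∧
      ∀ q ∈ L.antichain, ∃ a ∈ A, L.moveI q ≤ a ∧ reply a (L.moveI q) = q := by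
  classical
  choose C hCD hC hCmax using fun a => exists_pairwise_subset_forall_compat (reply a '' Iic a)
  have hle : ∀ a ∈ A, ∀ q ∈ C a, q ≤ a := by
    intro a ha q hq
    obtain ⟨p, hp, rfl⟩ := hCD a hq
    exact (hreply a ha p hp).trans hp
  have hpick : ∀ q, ∃ p, ∀ a ∈ A, q ∈ C a → p ≤ a ∧ reply a p = q := by
    intro q
    by_cases h : ∃ a ∈ A, q ∈ C a
    · obtain ⟨a, ha, hq⟩ := h
      obtain ⟨p, hp, hpq⟩ := hCD a hq
      refine ⟨p, fun a' ha' hq' => ?_⟩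
      rw [hA.eq_of_le ha' ha (hle a' ha' q hq') (hle a ha q hq)]
      exact ⟨hp, hpq⟩
    · exact ⟨q, fun a ha hq => (h ⟨a, ha, hq⟩).elim⟩
  choose moveI hmoveI using hpick
  refine ⟨⟨⋃ a ∈ A, C a, moveI⟩, hA.biUnion hle (fun a _ => hC a) fun a ha p hp => ?_,
    fun q hq => ?_⟩
  · obtain ⟨c, hc, hpc⟩ := hCmax a (reply a p) ⟨p, hp, rfl⟩
    exact ⟨c, hc, hpc.mono_left (hreply a ha p hp)⟩
  · obtain ⟨a, ha, hq⟩ := mem_iUnion₂.1 hq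
    exact ⟨a, ha, hmoveI q a ha hq⟩

section Tower

variable {P : Type*} [Preorder P] {σ : IIStrategy P} {T T' : Ordinal → Level P}
  {a b c q : P} {k β γ δ : Ordinal}

open Classical in
/-- Player II's move at stage `δ` in the play through `a`: the member of level `δ + 1`
above `a` (junk if there is none). -/
noncomputable def threadII (T : Ordinal → Level P) (a : P) (δ : Ordinal) : P :=
  if h : ∃ c ∈ (T (δ + 1)).antichain, a ≤ c then h.choose else a

noncomputable def threadI (T : Ordinal → Level P) (a : P) (δ : Ordinal) : P :=
  (T (δ + 1)).moveI (threadII T a δ)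

def IsLevel (σ : IIStrategy P) (T : Ordinal → Level P) (β : Ordinal) : Prop :=
  MaxAntichain (T β).antichain ∧ (∀ γ < β, RefinesAC (T β).antichain (T γ).antichain) ∧
    ∀ a ∈ (T β).antichain, IsPosition σ β (threadI T a) (threadII T a)

theorem threadII_spec (h : ∃ c ∈ (T (δ + 1)).antichain, a ≤ c) :
    threadII T a δ ∈ (T (δ + 1)).antichain ∧ a ≤ threadII T a δ := by
  rw [threadII, dif_pos h]
  exact h.choose_spec

theorem threadII_congr (h : T (δ + 1) = T' (δ + 1)) : threadII T a δ = threadII T' a δ := by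
  rw [threadII, threadII, h]

theorem threadI_congr (h : T (δ + 1) = T' (δ + 1)) : threadI T a δ = threadI T' a δ := by
  rw [threadI, threadI, threadII_congr h, h]

theorem threadII_eq_of_le (hA : MaxAntichain (T (δ + 1)).antichain)
    (hc : ∃ d ∈ (T (δ + 1)).antichain, c ≤ d) (hbc : b ≤ c) :
    threadII T b δ = threadII T c δ := by
  obtain ⟨hc_mem, hc_le⟩ := threadII_spec hc
  obtain ⟨hb_mem, hb_le⟩ := threadII_spec ⟨_, hc_mem, hbc.trans hc_le⟩
  exact hA.eq_of_le hb_mem hc_mem hb_le (hbc.trans hc_le)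

theorem threadII_eq_self (hA : MaxAntichain (T (δ + 1)).antichain)
    (hq : q ∈ (T (δ + 1)).antichain) : threadII T q δ = q := by
  obtain ⟨hmem, hle⟩ := threadII_spec ⟨q, hq, le_rfl⟩
  exact hA.eq_of_le hmem hq hle le_rfl

theorem IsLevel.exists_mem_above (hT : IsLevel σ T β) (ha : a ∈ (T β).antichain)
    (hγ : γ ≤ β) : ∃ c ∈ (T γ).antichain, a ≤ c := by
  rcases hγ.lt_or_eq with hγ | rfl
  · exact hT.2.1 γ hγ a ha
  · exact ⟨a, ha, le_rfl⟩

theorem IsLevel.le_threadII (hT : IsLevel σ T β) (ha : a ∈ (T β).antichain) (hδ : δ < β) :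
    a ≤ threadII T a δ :=
  (threadII_spec (hT.exists_mem_above ha (add_one_le_of_lt hδ))).2

theorem IsLevel.congr (h : ∀ γ ≤ β, T γ = T' γ) (hT : IsLevel σ T β) : IsLevel σ T' β := by
  obtain ⟨hmax, hrefines, hpos⟩ := hT
  unfold IsLevel
  rw [← h β le_rfl]
  refine ⟨hmax, fun γ hγ => h γ hγ.le ▸ hrefines γ hγ, fun a ha => (hpos a ha).congr ?_ ?_⟩
  · exact fun δ hδ => threadI_congr (h _ (add_one_le_of_lt hδ))
  · exact fun δ hδ => threadII_congr (h _ (add_one_le_of_lt hδ))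

theorem IsLevel.move_le (hσ : LegalStrategy k σ) (hγ : γ < k) (hT : IsLevel σ T γ) {p : P}
    (ha : a ∈ (T γ).antichain) (hp : p ≤ a) :
    σ.move γ (update (threadI T a) γ p) (threadII T a) ≤ p := by
  have hpos : IsPosition σ γ (update (threadI T a) γ p) (threadII T a) :=
    (hT.2.2 a ha).congr (fun δ hδ => (update_of_ne hδ.ne _ _).symm) (fun _ _ => rfl)
  have := hσ γ hγ _ _ hpos fun δ hδ => by
    rw [update_self]; exact hp.trans (hT.le_threadII ha hδ)
  rwa [update_self] at this

theorem isPosition_thread_of_le (hT : ∀ γ ≤ β, IsLevel σ T γ) (hc : c ∈ (T β).antichain)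
    (hbc : b ≤ c) : IsPosition σ β (threadI T b) (threadII T b) := by
  have hthread : ∀ δ < β, threadII T c δ = threadII T b δ := fun δ hδ =>
    (threadII_eq_of_le (hT _ (add_one_le_of_lt hδ)).1
      ((hT β le_rfl).exists_mem_above hc (add_one_le_of_lt hδ)) hbc).symm
  exact ((hT β le_rfl).2.2 c hc).congr (fun δ hδ => by rw [threadI, threadI, hthread δ hδ])
    hthread

theorem isLevel_of_refines (hT : ∀ γ < β, IsLevel σ T γ) (hβ : ∀ γ, γ + 1 ≠ β)
    (hmax : MaxAntichain (T β).antichain)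
    (hrefines : ∀ γ < β, RefinesAC (T β).antichain (T γ).antichain) : IsLevel σ T β := by
  refine ⟨hmax, hrefines, fun b hb γ hγ => ?_⟩
  have hγ1 : γ + 1 < β := (add_one_le_of_lt hγ).lt_of_ne (hβ γ)
  obtain ⟨c, hc, hbc⟩ := hrefines (γ + 1) hγ1 b hb
  exact isPosition_thread_of_le (fun δ hδ => hT δ (hδ.trans_lt hγ1)) hc hbc γ (lt_add_one γ)

theorem isPosition_thread_succ (hT : ∀ δ ≤ γ, IsLevel σ T δ)
    (hL : MaxAntichain (T (γ + 1)).antichain) (ha : a ∈ (T γ).antichain)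
    (hq : q ∈ (T (γ + 1)).antichain) (hqa : q ≤ a) (hpa : (T (γ + 1)).moveI q ≤ a)
    (hqp : q ≤ (T (γ + 1)).moveI q)
    (hreply : σ.move γ (update (threadI T a) γ ((T (γ + 1)).moveI q)) (threadII T a) = q) :
    IsPosition σ (γ + 1) (threadI T q) (threadII T q) := by
  have hthread : ∀ δ < γ + 1, threadII T q δ = update (threadII T a) γ q δ := by
    intro δ hδ
    rcases (lt_add_one_iff.1 hδ).lt_or_eq with hδ | rfl
    · rw [update_of_ne hδ.ne]
      exact threadII_eq_of_le (hT _ (add_one_le_of_lt hδ)).1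
        ((hT γ le_rfl).exists_mem_above ha (add_one_le_of_lt hδ)) hqa
    · rw [update_self, threadII_eq_self hL hq]
  have hpos := ((hT γ le_rfl).2.2 a ha).succ
    (fun δ hδ => hpa.trans ((hT γ le_rfl).le_threadII ha hδ)) hqp hreply.symm
  refine hpos.congr (fun δ hδ => ?_) (fun δ hδ => (hthread δ hδ).symm)
  rw [threadI, hthread δ hδ]
  rcases (lt_add_one_iff.1 hδ).lt_or_eq with hδ | rfl
  · rw [update_of_ne hδ.ne, update_of_ne hδ.ne, threadI]
  · rw [update_self, update_self]

theorem exists_isLevel_succ (hσ : LegalStrategy k σ) (hγ : γ < k)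
    (hT : ∀ δ ≤ γ, IsLevel σ T δ) : ∃ L, IsLevel σ (update T (γ + 1) L) (γ + 1) := by
  obtain ⟨L, hL, hanswer⟩ := (hT γ le_rfl).1.exists_level_answers
    (fun a p => σ.move γ (update (threadI T a) γ p) (threadII T a))
    fun a ha p hp => (hT γ le_rfl).move_le hσ hγ ha hp
  refine ⟨L, ?_⟩
  set T' := update T (γ + 1) L
  have hT'L : T' (γ + 1) = L := update_self _ _ _
  have hT'T : ∀ δ ≤ γ, T' δ = T δ := fun δ hδ => update_of_ne (lt_add_one_iff.2 hδ).ne _ _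
  have hT' : ∀ δ ≤ γ, IsLevel σ T' δ := fun δ hδ =>
    (hT δ hδ).congr fun ε hε => (hT'T ε (hε.trans hδ)).symm
  refine ⟨hT'L ▸ hL, fun δ hδ q hq => ?_, fun q hq => ?_⟩
  all_goals
    rw [hT'L] at hq
    obtain ⟨a, ha, hpa, hreply⟩ := hanswer q hq
    have hqp : q ≤ L.moveI q := hreply.ge.trans ((hT γ le_rfl).move_le hσ hγ ha hpa)
  · rw [hT'T δ (lt_add_one_iff.1 hδ)]
    obtain ⟨d, hd, had⟩ := (hT γ le_rfl).exists_mem_above ha (lt_add_one_iff.1 hδ)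
    exact ⟨d, hd, (hqp.trans hpa).trans had⟩
  · rw [← hT'T γ le_rfl] at ha
    rw [← hT'L] at hL hq hpa hqp hreply
    refine isPosition_thread_succ hT' hL ha hq (hqp.trans hpa) hpa hqp (Eq.trans ?_ hreply)
    refine σ.depends_only_on_past γ _ _ _ _ (fun δ hδ => ?_)
      fun δ hδ => threadII_congr (hT'T _ (add_one_le_of_lt hδ))
    rcases hδ.lt_or_eq with hδ | rfl
    · rw [update_of_ne hδ.ne, update_of_ne hδ.ne, threadI_congr (hT'T _ (add_one_le_of_lt hδ))]
    · rw [update_self, update_self]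

theorem exists_isLevel_of_refines (hT : ∀ γ < β, IsLevel σ T γ) (hβ : ∀ γ, γ + 1 ≠ β)
    {B : Set P} (hB : MaxAntichain B) (hBr : ∀ γ < β, RefinesAC B (T γ).antichain) :
    ∃ L, IsLevel σ (update T β L) β := by
  have hT'T : ∀ γ < β, update T β ⟨B, id⟩ γ = T γ := fun γ hγ => update_of_ne hγ.ne _ _
  refine ⟨⟨B, id⟩, isLevel_of_refines (fun γ hγ => ?_) hβ ?_ fun γ hγ => ?_⟩
  · exact (hT γ hγ).congr fun δ hδ => (hT'T δ (hδ.trans_lt hγ)).symm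
  · rwa [update_self]
  · rw [update_self, hT'T γ hγ]
    exact hBr γ hγ

end Tower

theorem not_winningForII_of_forall_refines {P : Type*} [Preorder P] [Nonempty P]
    (σ : IIStrategy P) (k : Ordinal)
    (hrefine : ∀ β ≤ k, ∀ A : Ordinal → Set P, (∀ γ < β, MaxAntichain (A γ)) →
      ∃ B, MaxAntichain B ∧ ∀ γ < β, RefinesAC B (A γ)) :
    ¬ WinningForII k σ := by
  rintro ⟨hlegal, hwin⟩
  obtain ⟨T, hT⟩ := exists_forall_le_of_extend (IsLevel σ) k (fun _ _ _ h => IsLevel.congr h)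
    fun β hβ T hT => by
      by_cases hsucc : ∃ γ, γ + 1 = β
      · obtain ⟨γ, rfl⟩ := hsucc
        exact exists_isLevel_succ hlegal (add_one_le_iff.1 hβ)
          fun δ hδ => hT δ (lt_add_one_iff.2 hδ)
      · obtain ⟨B, hB, hBr⟩ :=
          hrefine β hβ (fun γ => (T γ).antichain) fun γ hγ => (hT γ hγ).1
        exact exists_isLevel_of_refines hT (not_exists.1 hsucc) hB hBr
  obtain ⟨a, ha, -⟩ := (hT k le_rfl).1.2 (Classical.arbitrary P)
  exact hwin _ _ ((hT k le_rfl).2.2 a ha) ⟨a, fun δ hδ => (hT k le_rfl).le_threadII ha hδ⟩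

theorem forall_refines_Iio_of_forall_refines {P : Type*} [Preorder P] {κ : Cardinal}
    (hrefine : ∀ (I : Type) (A : I → Set P), Cardinal.mk I ≤ κ →
      (∀ i, MaxAntichain (A i)) → ∃ B, MaxAntichain B ∧ ∀ i, RefinesAC B (A i))
    {β : Ordinal} (hβ : β ≤ κ.ord) (A : Ordinal → Set P) (hA : ∀ γ < β, MaxAntichain (A γ)) :
    ∃ B, MaxAntichain B ∧ ∀ γ < β, RefinesAC B (A γ) := by
  have hcard : Cardinal.mk β.ToType ≤ κ := by
    rw [Cardinal.mk_toType, ← Cardinal.card_ord κ]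
    exact Ordinal.card_le_card hβ
  obtain ⟨B, hB, hBr⟩ := hrefine β.ToType (fun i => A (Ordinal.ToType.mk.symm i)) hcard
    fun i => hA _ (Ordinal.ToType.mk.symm i).2
  refine ⟨B, hB, fun γ hγ => ?_⟩
  simpa using hBr (Ordinal.ToType.mk ⟨γ, hγ⟩)

theorem antichains_of_winning_general {ι : Type} (κ : Cardinal)
    (h : ∃ σ : IIStrategy (PCond ι), WinningForII κ.ord σ) :
    ∃ (I : Type) (A : I → Set (PCond ι)),
      Cardinal.mk I ≤ κ ∧ (∀ a, MaxAntichain (A a)) ∧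
        ¬ ∃ B : Set (PCond ι), MaxAntichain B ∧ ∀ a, RefinesAC B (A a) := by
  by_contra! hrefine
  obtain ⟨σ, hσ⟩ := h
  have : Nonempty (PCond ι) := ⟨⟨fun _ => univ, fun _ => infinite_univ⟩⟩
  exact not_winningForII_of_forall_refines σ κ.ord
    (fun _ hβ => forall_refines_Iio_of_forall_refines hrefine hβ) hσ

/-- If player II has a winning strategy in the game `G(P_λ, κ)` (for a nonempty
index set `λ`), then there is a family of at most `κ` maximal antichains of `P_λ`
such that no maximal antichain refines all of them. -/
theorem antichains_of_winning {ι : Type} [Nonempty ι] (κ : Cardinal)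
    (h : ∃ σ : IIStrategy (PCond ι), WinningForII κ.ord σ) :
    ∃ (I : Type) (A : I → Set (PCond ι)),
      Cardinal.mk I ≤ κ ∧ (∀ a, MaxAntichain (A a)) ∧
        ¬ ∃ B : Set (PCond ι), MaxAntichain B ∧ ∀ a, RefinesAC B (A a) :=
  antichains_of_winning_general κ h
end

section
/- For every nonzero cardinal λ, the distributivity number ℎ(λ) equals the least cardinal κ such that player II has a winning strategy in the game G(P_λ, κ) of length κ. -/
open Set

/-- The distributivity number of `P_ι`: the least cardinal `κ` such that there is
a family of `κ` dense open subsets of `P_ι` whose intersection is not dense. -/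
noncomputable def distNum (ι : Type) : Cardinal :=
  sInf {κ : Cardinal |
    ∃ (I : Type) (D : I → Set (PCond ι)),
      Cardinal.mk I = κ ∧ (∀ a, OpenIn (D a) ∧ DenseIn (D a)) ∧
        ¬ DenseIn (⋂ a, D a)}

/-- The distributivity number `ℎ(λ)` of `(P(ω)/fin)^λ` for a cardinal `λ`. -/
noncomputable def hCard (l : Cardinal) : Cardinal :=
  distNum (Quotient.out l)

/-! If II has a winning strategy `σ` in `G(P, κ)`, arrange the partial `σ`-plays into a tree
whose `β`-th level is a maximal family of plays of length `β + 1` with pairwise incompatible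
last moves, extending plays of the earlier levels (a "strategic matrix").  The conditions below
a last move of level `β`, together with those admitting no extension below a branch of height
`β`, form a dense open set; a condition in all `κ` of them lies below a unique node of every
level, and these nodes cohere into a `σ`-run with a lower bound.  Conversely, if `κ` dense open
sets have empty intersection, II wins by moving into the `β`-th one at stage `β`.

For `P_λ` both properties are equivalent to the existence of `κ` dense open sets with non-dense
intersection: the cone below any `p₀` receives an embedding of all of `P_λ` (coordinatewise
images under the increasing enumerations of the sets `p₀ α`), along which a family whose
intersection misses the cone below `p₀` pulls back to one with empty intersection. -/

namespace DistributivityGame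

section Preorder

variable {P : Type*} [Preorder P]

def Compatible (a b : P) : Prop := ∃ c, c ≤ a ∧ c ≤ b

theorem Compatible.symm {a b : P} : Compatible a b → Compatible b a
  | ⟨c, ha, hb⟩ => ⟨c, hb, ha⟩

theorem exists_maximal_incompatible {X : Type*} (f : X → P) (S : Set X) :
    ∃ F ⊆ S, F.Pairwise (fun x y => ¬ Compatible (f x) (f y)) ∧
      ∀ s ∈ S, ∃ t ∈ F, Compatible (f s) (f t) := by
  set 𝒜 := {F | F ⊆ S ∧ F.Pairwise (fun x y => ¬ Compatible (f x) (f y))}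
  obtain ⟨F, hF⟩ := zorn_subset 𝒜 fun c hc hchain =>
    ⟨⋃₀ c, ⟨sUnion_subset fun F hF => (hc hF).1,
      (pairwise_sUnion hchain.directedOn).2 fun F hF => (hc hF).2⟩,
      fun _ => subset_sUnion_of_mem⟩
  refine ⟨F, hF.prop.1, hF.prop.2, fun s hs => ?_⟩
  by_contra! hnone
  have hsF : s ∉ F := fun h => hnone s h ⟨f s, le_rfl, le_rfl⟩
  have hins : insert s F ∈ 𝒜 := ⟨insert_subset hs hF.prop.1,
    hF.prop.2.insert fun t ht _ => ⟨hnone t ht, fun h => hnone t ht h.symm⟩⟩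
  exact hsF (hF.2 hins (subset_insert s F) (mem_insert s F))

variable {σ : IIStrategy P} {o β : Ordinal} {pI pII pI' pII' : Ordinal → P}

theorem IsPosition.congr (h : IsPosition σ β pI pII) (hI : ∀ γ < β, pI γ = pI' γ)
    (hII : ∀ γ < β, pII γ = pII' γ) : IsPosition σ β pI' pII' := by
  intro γ hγ
  obtain ⟨h₁, h₂, h₃⟩ := h γ hγ
  refine ⟨fun δ hδ => ?_, ?_, ?_⟩
  · rw [← hI γ hγ, ← hII δ (hδ.trans hγ)]
    exact h₁ δ hδ
  · rw [← hI γ hγ, ← hII γ hγ]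
    exact h₂
  · rw [← hII γ hγ, h₃]
    exact σ.depends_only_on_past γ _ _ _ _ (fun δ hδ => hI δ (hδ.trans_lt hγ))
      (fun δ hδ => hII δ (hδ.trans hγ))

abbrev Play (P : Type*) := (Ordinal.{0} → P) × (Ordinal.{0} → P)

variable (σ) in
noncomputable def extend (β : Ordinal) (y : P) (pI pII : Ordinal → P) : Play P :=
  (Function.update pI β y, Function.update pII β (σ.move β (Function.update pI β y) pII))

theorem isPosition_extend {y : P} (hσ : LegalStrategy o σ) (hβ : β < o)
    (h : IsPosition σ β pI pII) (hy : ∀ γ < β, y ≤ pII γ) :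
    IsPosition σ (β + 1) (extend σ β y pI pII).1 (extend σ β y pI pII).2 := by
  set pI' := Function.update pI β y
  have hI : ∀ γ < β, pI γ = pI' γ := fun γ hγ => (Function.update_of_ne hγ.ne _ _).symm
  have hII : ∀ γ < β, pII γ = (extend σ β y pI pII).2 γ :=
    fun γ hγ => (Function.update_of_ne hγ.ne _ _).symm
  have hlegal : σ.move β pI' pII ≤ y := by
    simpa [pI'] using hσ β hβ pI' pII (IsPosition.congr h hI fun _ _ => rfl)
      fun γ hγ => by simpa [pI'] using hy γ hγ
  have hmove : σ.move β pI' (extend σ β y pI pII).2 = σ.move β pI' pII :=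
    σ.depends_only_on_past _ _ _ _ _ (fun _ _ => rfl) fun γ hγ => (hII γ hγ).symm
  intro γ hγ
  rcases (Order.lt_add_one_iff.mp hγ).lt_or_eq with hγ | rfl
  · exact IsPosition.congr h hI hII γ hγ
  · refine ⟨fun δ hδ => ?_, ?_, ?_⟩
    · rw [← hII δ hδ]
      simpa [extend] using hy δ hδ
    · simpa [extend] using hlegal
    · simpa [extend] using hmove.symm

def AgreeUpTo (γ : Ordinal) (b t : Play P) : Prop :=
  ∀ δ ≤ γ, b.1 δ = t.1 δ ∧ b.2 δ = t.2 δ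

section Matrix

variable (σ)

def Extensions (β : Ordinal) (T : ∀ γ < β, Set (Play P)) : Set (Play P) :=
  {b | IsPosition σ (β + 1) b.1 b.2 ∧ ∀ γ (hγ : γ < β), ∃ t ∈ T γ hγ, AgreeUpTo γ b t}

noncomputable def level (β : Ordinal) (T : ∀ γ < β, Set (Play P)) : Set (Play P) :=
  (exists_maximal_incompatible (fun b => b.2 β) (Extensions σ β T)).choose

noncomputable def matrix : Ordinal → Set (Play P) :=
  Ordinal.lt_wf.fix (level σ)

theorem matrix_eq (β : Ordinal) : matrix σ β = level σ β (fun γ _ => matrix σ γ) :=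
  Ordinal.lt_wf.fix_eq _ β

theorem matrix_subset (β : Ordinal) : matrix σ β ⊆ Extensions σ β (fun γ _ => matrix σ γ) := by
  rw [matrix_eq]
  exact (exists_maximal_incompatible _ _).choose_spec.1

theorem matrix_pairwise (β : Ordinal) :
    (matrix σ β).Pairwise (fun b t => ¬ Compatible (b.2 β) (t.2 β)) := by
  rw [matrix_eq]
  exact (exists_maximal_incompatible _ _).choose_spec.2.1

theorem exists_mem_matrix_compatible (β : Ordinal) {b : Play P}
    (hb : b ∈ Extensions σ β (fun γ _ => matrix σ γ)) :
    ∃ t ∈ matrix σ β, Compatible (b.2 β) (t.2 β) := by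
  rw [matrix_eq]
  exact (exists_maximal_incompatible _ _).choose_spec.2.2 b hb

def BelowBranch (β : Ordinal) : Set P :=
  {x | ∃ b : Play P, IsPosition σ β b.1 b.2 ∧ (∀ γ < β, ∃ t ∈ matrix σ γ, AgreeUpTo γ b t) ∧
    ∀ γ < β, x ≤ b.2 γ}

def matrixSet (β : Ordinal) : Set P :=
  {x | ∃ t ∈ matrix σ β, x ≤ t.2 β} ∪ {x | ∀ y ≤ x, y ∉ BelowBranch σ β}

theorem openIn_matrixSet (β : Ordinal) : OpenIn (matrixSet σ β) := by
  rintro x (⟨t, ht, hx⟩ | hx) y hyx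
  · exact Or.inl ⟨t, ht, hyx.trans hx⟩
  · exact Or.inr fun z hz => hx z (hz.trans hyx)

theorem denseIn_matrixSet (hσ : LegalStrategy o σ) (hβ : β < o) : DenseIn (matrixSet σ β) := by
  intro p
  by_cases h : ∃ y ≤ p, y ∈ BelowBranch σ β
  · obtain ⟨y, hyp, b, hpos, hthrough, hyb⟩ := h
    have hext := isPosition_extend hσ hβ hpos hyb
    have hmem : extend σ β y b.1 b.2 ∈ Extensions σ β (fun γ _ => matrix σ γ) := by
      refine ⟨hext, fun γ hγ => ?_⟩
      obtain ⟨t, ht, hagree⟩ := hthrough γ hγ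
      refine ⟨t, ht, fun δ hδ => ?_⟩
      have hne : δ ≠ β := (hδ.trans_lt hγ).ne
      simpa [extend, Function.update_of_ne hne] using hagree δ hδ
    obtain ⟨t, ht, c, hc, hct⟩ := exists_mem_matrix_compatible σ β hmem
    have hlast : (extend σ β y b.1 b.2).2 β ≤ y := by
      simpa [extend] using (hext β (Order.lt_add_one_iff.mpr le_rfl)).2.1
    exact ⟨c, Or.inl ⟨t, ht, hct⟩, hc.trans (hlast.trans hyp)⟩
  · push Not at h
    exact ⟨p, Or.inr h, le_rfl⟩

end Matrix

section Branch

variable (σ) (x : P)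

noncomputable def nodeAbove (β : Ordinal) : Play P :=
  haveI : Nonempty P := ⟨x⟩
  Classical.epsilon fun t => t ∈ matrix σ β ∧ x ≤ t.2 β

noncomputable def branchAbove : Play P :=
  (fun β => (nodeAbove σ x β).1 β, fun β => (nodeAbove σ x β).2 β)

variable {σ x}

theorem nodeAbove_spec (h : ∃ t ∈ matrix σ β, x ≤ t.2 β) :
    nodeAbove σ x β ∈ matrix σ β ∧ x ≤ (nodeAbove σ x β).2 β :=
  haveI : Nonempty P := ⟨x⟩
  Classical.epsilon_spec h

theorem eq_nodeAbove {t : Play P} (ht : t ∈ matrix σ β) (hxt : x ≤ t.2 β) :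
    t = nodeAbove σ x β := by
  obtain ⟨hmem, hx⟩ := nodeAbove_spec ⟨t, ht, hxt⟩
  by_contra hne
  exact matrix_pairwise σ β ht hmem hne ⟨x, hxt, hx⟩

theorem agreeUpTo_nodeAbove {γ : Ordinal} (hγ : γ < β) (h : ∃ t ∈ matrix σ β, x ≤ t.2 β) :
    AgreeUpTo γ (nodeAbove σ x β) (nodeAbove σ x γ) := by
  obtain ⟨hmem, hx⟩ := nodeAbove_spec h
  obtain ⟨hpos, hthrough⟩ := matrix_subset σ β hmem
  obtain ⟨t, ht, hagree⟩ := hthrough γ hγ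
  obtain ⟨hI, hII, -⟩ := hpos β (Order.lt_add_one_iff.mpr le_rfl)
  have hxt : x ≤ t.2 γ := by
    rw [← (hagree γ le_rfl).2]
    exact hx.trans (hII.trans (hI γ hγ))
  rwa [← eq_nodeAbove ht hxt]

theorem agreeUpTo_branchAbove (h : ∀ γ ≤ β, ∃ t ∈ matrix σ γ, x ≤ t.2 γ) :
    AgreeUpTo β (branchAbove σ x) (nodeAbove σ x β) := by
  intro δ hδ
  rcases hδ.lt_or_eq with hδ | rfl
  · obtain ⟨hI, hII⟩ := agreeUpTo_nodeAbove hδ (h β le_rfl) δ le_rfl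
    exact ⟨hI.symm, hII.symm⟩
  · exact ⟨rfl, rfl⟩

theorem isPosition_branchAbove (h : ∀ γ < β, ∃ t ∈ matrix σ γ, x ≤ t.2 γ) :
    IsPosition σ β (branchAbove σ x).1 (branchAbove σ x).2 := by
  intro γ hγ
  have hagree := agreeUpTo_branchAbove fun δ hδ => h δ (hδ.trans_lt hγ)
  have hpos := (matrix_subset σ γ (nodeAbove_spec (h γ hγ)).1).1
  exact IsPosition.congr hpos (fun δ hδ => (hagree δ (Order.lt_add_one_iff.mp hδ)).1.symm)
    (fun δ hδ => (hagree δ (Order.lt_add_one_iff.mp hδ)).2.symm) γ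
    (Order.lt_add_one_iff.mpr le_rfl)

theorem mem_belowBranch (h : ∀ γ < β, ∃ t ∈ matrix σ γ, x ≤ t.2 γ) : x ∈ BelowBranch σ β :=
  ⟨branchAbove σ x, isPosition_branchAbove h,
    fun γ hγ => ⟨nodeAbove σ x γ, (nodeAbove_spec (h γ hγ)).1,
      agreeUpTo_branchAbove fun δ hδ => h δ (hδ.trans_lt hγ)⟩,
    fun γ hγ => (nodeAbove_spec (h γ hγ)).2⟩

theorem exists_mem_matrix_of_mem_matrixSet (hx : ∀ β < o, x ∈ matrixSet σ β) :
    ∀ β < o, ∃ t ∈ matrix σ β, x ≤ t.2 β := by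
  intro β
  induction β using WellFoundedLT.induction with
  | _ β ih =>
    intro hβ
    rcases hx β hβ with h | h
    · exact h
    · exact absurd (mem_belowBranch fun γ hγ => ih γ hγ (hγ.trans hβ)) (h x le_rfl)

/-- A condition in every `matrixSet σ β`, `β < o`, bounds the `σ`-run `branchAbove x`. -/
theorem not_forall_mem_matrixSet (hσ : WinningForII o σ) : ¬ ∀ β < o, x ∈ matrixSet σ β := by
  intro hx
  have h := exists_mem_matrix_of_mem_matrixSet hx
  exact hσ.2 _ _ (isPosition_branchAbove h) ⟨x, fun β hβ => (nodeAbove_spec (h β hβ)).2⟩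

end Branch

noncomputable def strategyInto {o : Ordinal} (D : o.ToType → Set P) (hD : ∀ t, DenseIn (D t)) :
    IIStrategy P where
  move β pI _ := if h : β < o then (hD (Ordinal.ToType.mk ⟨β, h⟩) (pI β)).choose else pI β
  depends_only_on_past β _ _ _ _ hI _ := by simp only [hI β le_rfl]

theorem strategyInto_move {o β : Ordinal} (D : o.ToType → Set P) (hD : ∀ t, DenseIn (D t))
    (hβ : β < o) (pI pII : Ordinal → P) :
    (strategyInto D hD).move β pI pII = (hD (Ordinal.ToType.mk ⟨β, hβ⟩) (pI β)).choose :=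
  dif_pos hβ

theorem winningForII_strategyInto {o : Ordinal} (D : o.ToType → Set P)
    (hD : ∀ t, OpenIn (D t) ∧ DenseIn (D t)) (hempty : ⋂ t, D t = ∅) :
    WinningForII o (strategyInto D fun t => (hD t).2) := by
  constructor
  · intro β hβ pI _ _ _
    rw [strategyInto_move D _ hβ]
    exact ((hD _).2 (pI β)).choose_spec.2
  · rintro pI pII hrun ⟨q, hq⟩
    suffices q ∈ ⋂ t, D t by simp [hempty] at this
    refine mem_iInter.2 fun t => ?_
    obtain ⟨⟨β, hβ⟩, rfl⟩ := Ordinal.ToType.mk.surjective t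
    have hmove : pII β ∈ D (Ordinal.ToType.mk ⟨β, hβ⟩) := by
      rw [(hrun β hβ).2.2, strategyInto_move D _ hβ]
      exact ((hD _).2 (pI β)).choose_spec.1
    exact (hD _).1 _ hmove q (hq β hβ)

theorem exists_winningForII_iff (o : Ordinal) :
    (∃ σ : IIStrategy P, WinningForII o σ) ↔
      ∃ D : o.ToType → Set P, (∀ t, OpenIn (D t) ∧ DenseIn (D t)) ∧ ⋂ t, D t = ∅ := by
  constructor
  · rintro ⟨σ, hσ⟩
    refine ⟨fun t => matrixSet σ (Ordinal.ToType.mk.symm t).1, fun t =>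
      ⟨openIn_matrixSet σ _, denseIn_matrixSet σ hσ.1 (Ordinal.ToType.mk.symm t).2⟩, ?_⟩
    refine eq_empty_of_forall_notMem fun x hx => not_forall_mem_matrixSet (x := x) hσ fun β hβ => ?_
    simpa using mem_iInter.1 hx (Ordinal.ToType.mk ⟨β, hβ⟩)
  · rintro ⟨D, hD, hempty⟩
    exact ⟨_, winningForII_strategyInto D hD hempty⟩

/-- Pulling a family back along a dense embedding `Φ` of `P` into the cone below `p₀`. -/
theorem exists_iInter_eq_empty_of_embedding {I : Type*} {D : I → Set P}
    (hD : ∀ a, OpenIn (D a) ∧ DenseIn (D a)) {p₀ : P} (hp₀ : ∀ q ∈ ⋂ a, D a, ¬ q ≤ p₀)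
    {Φ : P → P} (hmono : Monotone Φ) (hle : ∀ q, Φ q ≤ p₀)
    (hlift : ∀ q u, u ≤ Φ q → ∃ q' ≤ q, Φ q' ≤ u) :
    ∃ D' : I → Set P, (∀ a, OpenIn (D' a) ∧ DenseIn (D' a)) ∧ ⋂ a, D' a = ∅ := by
  refine ⟨fun a => Φ ⁻¹' D a, fun a => ⟨fun q hq r hrq => (hD a).1 _ hq _ (hmono hrq),
    fun q => ?_⟩, eq_empty_of_forall_notMem fun q hq => hp₀ (Φ q) ?_ (hle q)⟩
  · obtain ⟨u, hu, huq⟩ := (hD a).2 (Φ q)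
    obtain ⟨q', hq'q, hq'u⟩ := hlift q u huq
    exact ⟨q', (hD a).1 u hu _ hq'u, hq'q⟩
  · exact mem_iInter.2 fun a => mem_iInter.1 hq a

end Preorder

end DistributivityGame

namespace PCond

variable {ι : Type*}

instance : Nonempty (PCond ι) :=
  ⟨⟨fun _ => univ, fun _ => infinite_univ⟩⟩

theorem le_of_subset {p q : PCond ι} (h : ∀ α, q.1 α ⊆ p.1 α) : q ≤ p := fun α => by
  rw [sdiff_eq_empty.2 (h α)]
  exact finite_empty

noncomputable def transport (p₀ q : PCond ι) : PCond ι :=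
  ⟨fun α => Nat.nth (· ∈ p₀.1 α) '' q.1 α,
    fun α => (q.2 α).image (Nat.nth_injective (p₀.2 α)).injOn⟩

theorem transport_le (p₀ q : PCond ι) : transport p₀ q ≤ p₀ :=
  le_of_subset fun α => (image_subset_range _ _).trans (Nat.range_nth_of_infinite (p₀.2 α)).subset

theorem transport_mono (p₀ : PCond ι) : Monotone (transport p₀) := fun q q' h α => by
  have := (h α).image (Nat.nth (· ∈ p₀.1 α))
  rwa [image_sdiff (Nat.nth_injective (p := (· ∈ p₀.1 α)) (p₀.2 α))] at this

theorem exists_transport_le (p₀ q u : PCond ι) (hu : u ≤ transport p₀ q) :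
    ∃ q' ≤ q, transport p₀ q' ≤ u := by
  set e := fun α => Nat.nth (· ∈ p₀.1 α)
  have hinf : ∀ α, (q.1 α ∩ e α ⁻¹' u.1 α).Infinite := fun α => by
    refine Infinite.of_image (e α) ?_
    rw [image_inter_preimage, inter_comm, ← sdiff_sdiff_right_self]
    exact (u.2 α).sdiff (hu α)
  exact ⟨⟨fun α => q.1 α ∩ e α ⁻¹' u.1 α, hinf⟩, le_of_subset fun α => inter_subset_left,
    le_of_subset fun α => by simp [transport, e, image_inter_preimage]⟩

end PCond

open DistributivityGame Cardinal in
theorem hCard_eq_game_number_general (l : Cardinal) :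
    hCard l =
      sInf {κ : Cardinal |
        ∃ σ : IIStrategy (PCond (Quotient.out l)), WinningForII κ.ord σ} := by
  unfold hCard distNum
  congr 1
  ext κ
  simp only [mem_ofPred_eq, exists_winningForII_iff]
  constructor
  · rintro ⟨I, D, rfl, hD, hnotDense⟩
    obtain ⟨p₀, hp₀⟩ : ∃ p₀, ∀ q ∈ ⋂ a, D a, ¬ q ≤ p₀ := by simpa [DenseIn] using hnotDense
    obtain ⟨D', hD', hempty⟩ := exists_iInter_eq_empty_of_embedding hD hp₀
      (PCond.transport_mono p₀) (PCond.transport_le p₀) (PCond.exists_transport_le p₀)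
    obtain ⟨e⟩ : Nonempty (I ≃ (#I).ord.ToType) := Cardinal.eq.1 (by rw [mk_toType, card_ord])
    exact ⟨fun t => D' (e.symm t), fun t => hD' _, by rwa [e.symm.surjective.iInter_comp]⟩
  · rintro ⟨D, hD, hempty⟩
    refine ⟨κ.ord.ToType, D, by rw [mk_toType, card_ord], hD, fun hdense => ?_⟩
    obtain ⟨q, hq, -⟩ := hdense (Classical.arbitrary _)
    simp [hempty] at hq

/-- For every nonzero cardinal `λ`, the distributivity number `ℎ(λ)` equals the
least cardinal `κ` such that player II has a winning strategy in the game
`G(P_λ, κ)` of length `κ`. -/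
theorem hCard_eq_game_number (l : Cardinal) (hl : l ≠ 0) :
    hCard l =
      sInf {κ : Cardinal |
        ∃ σ : IIStrategy (PCond (Quotient.out l)), WinningForII κ.ord σ} :=
  hCard_eq_game_number_general l
end

section
/- Suppose D₁ and D₂ are Ramsey ultrafilters on ℕ which are not Rudin–Keisler equivalent. Then in the game G(D₁, D₂) player I has no winning strategy: for every strategy σ of player I there exists a run consistent with σ in which player II keeps the rules and, writing k₀, k₁, k₂, … for player II's moves, the set {k_{2i} : i < ω} belongs to D₁ and the set {k_{2i+1} : i < ω} belongs to D₂. -/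
open Set

/-- A Ramsey ultrafilter on `ℕ`: a nonprincipal ultrafilter such that every
colouring of the `n`-element subsets of `ℕ` with `k` colours has a homogeneous
set in the ultrafilter. -/
def IsRamseyUF (D : Ultrafilter ℕ) : Prop :=
  (∀ m : ℕ, ({m} : Set ℕ) ∉ D) ∧
    ∀ (n k : ℕ) (F : Finset ℕ → Fin k), ∃ H : Set ℕ, H ∈ D ∧
      ∀ s t : Finset ℕ, (s : Set ℕ) ⊆ H → (t : Set ℕ) ⊆ H →
        s.card = n → t.card = n → F s = F t

/-- The Rudin–Keisler order: `D ≤_RK U` iff `D` is the projection of `U` along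
some `f : ℕ → ℕ`, i.e. `D = { X : f⁻¹[X] ∈ U }`. -/
def RKle (D U : Ultrafilter ℕ) : Prop :=
  ∃ f : ℕ → ℕ, ∀ X : Set ℕ, X ∈ D ↔ f ⁻¹' X ∈ U

/-- Rudin–Keisler equivalence of ultrafilters. -/
def RKequiv (D U : Ultrafilter ℕ) : Prop :=
  RKle D U ∧ RKle U D

/-!
Player II plays the elements of sets `X ∈ D₁` and `Y ∈ D₂` in increasing order, those of `X`
at even and those of `Y` at odd positions, inserting a padding move wherever two consecutive
elements lie in the same set. Selectivity diagonalises player I's strategy: there are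
`U ∈ D₁`, `V ∈ D₂` and a threshold `β` such that every element of `U` (resp. `V`) above `β t`
is a legal reply to every history of length and entries at most `t`. The run is therefore
legal once consecutive elements of `X ∪ Y` are far apart with respect to a growth function
`G` computed from `β`. This is where non-equivalence enters: cut `ℕ` into consecutive
blocks, the one starting at `a` of length `G a + 1`, and map each point to its pair of
adjacent blocks (for both ways of pairing blocks). These maps are finite-to-one, hence
injective on a set in each Ramsey ultrafilter, so `D₁` and `D₂` are RK-equivalent to their
images; the images therefore differ, which yields `X`, `Y` on whose union both maps are
injective.
-/

open Filter

namespace IsRamseyUF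

variable {D : Ultrafilter ℕ}

lemma le_cofinite (hD : IsRamseyUF D) : (D : Filter ℕ) ≤ cofinite :=
  le_cofinite_iff_compl_singleton_mem.2 fun m => Ultrafilter.compl_mem_iff_notMem.2 (hD.1 m)

lemma infinite_of_mem (hD : IsRamseyUF D) {T : Set ℕ} (hT : T ∈ D) : T.Infinite := fun hfin =>
  Ultrafilter.compl_mem_iff_notMem.1 (hD.le_cofinite hfin.compl_mem_cofinite) hT

lemma Ioi_mem (hD : IsRamseyUF D) (b : ℕ) : Ioi b ∈ D :=
  hD.le_cofinite (by simp)

lemma exists_homogeneous_pairs (hD : IsRamseyUF D) (P : ℕ → ℕ → Prop) :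
    ∃ H ∈ D, (∀ x ∈ H, ∀ y ∈ H, x < y → P x y) ∨ (∀ x ∈ H, ∀ y ∈ H, x < y → ¬ P x y) := by
  classical
  obtain ⟨H, hH, hom⟩ := hD.2 2 2 fun s => if ∃ x ∈ s, ∃ y ∈ s, x < y ∧ P x y then 1 else 0
  have colour_pair : ∀ x y, x < y →
      ((∃ a ∈ ({x, y} : Finset ℕ), ∃ b ∈ ({x, y} : Finset ℕ), a < b ∧ P a b) ↔ P x y) := by
    intro x y hxy
    simp only [Finset.mem_insert, Finset.mem_singleton]
    constructor
    · rintro ⟨a, rfl | rfl, b, rfl | rfl, hab, hP⟩ <;> first | exact hP | omega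
    · exact fun hP => ⟨x, .inl rfl, y, .inr rfl, hxy, hP⟩
  have same_colour : ∀ x ∈ H, ∀ y ∈ H, ∀ x' ∈ H, ∀ y' ∈ H, x < y → x' < y' →
      (P x y ↔ P x' y') := by
    intro x hx y hy x' hx' y' hy' hxy hxy'
    have := hom {x, y} {x', y'} (by simp [Set.insert_subset_iff, hx, hy])
      (by simp [Set.insert_subset_iff, hx', hy']) (Finset.card_pair hxy.ne)
      (Finset.card_pair hxy'.ne)
    simp only [colour_pair x y hxy, colour_pair x' y' hxy'] at this
    split_ifs at this <;> simp_all
  refine ⟨H, hH, ?_⟩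
  by_cases hex : ∃ x ∈ H, ∃ y ∈ H, x < y ∧ P x y
  · obtain ⟨x₀, hx₀, y₀, hy₀, hlt, hP⟩ := hex
    exact .inl fun x hx y hy hxy => (same_colour x₀ hx₀ y₀ hy₀ x hx y hy hlt hxy).1 hP
  · push Not at hex
    exact .inr hex

lemma exists_injOn (hD : IsRamseyUF D) {g : ℕ → ℕ} (hg : ∀ n, (g ⁻¹' {n}).Finite) :
    ∃ H ∈ D, InjOn g H := by
  obtain ⟨H, hH, hP | hP⟩ := hD.exists_homogeneous_pairs fun x y => g x = g y
  · obtain ⟨x₀, hx₀⟩ := (hD.infinite_of_mem hH).nonempty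
    refine absurd ((hg (g x₀)).subset fun y hy => ?_) (hD.infinite_of_mem hH)
    rcases lt_trichotomy y x₀ with h | rfl | h
    · exact hP y hy x₀ hx₀ h
    · rfl
    · exact (hP x₀ hx₀ y hy h).symm
  · refine ⟨H, hH, fun x hx y hy hxy => ?_⟩
    rcases lt_trichotomy x y with h | h | h
    · exact absurd hxy (hP x hx y hy h)
    · exact h
    · exact absurd hxy.symm (hP y hy x hx h)

lemma exists_diagonal (hD : IsRamseyUF D) (A : ℕ → Set ℕ) (hA : ∀ t, A t ∈ D) :
    ∃ H ∈ D, ∀ x ∈ H, ∀ y ∈ H, x < y → y ∈ A x := by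
  obtain ⟨H, hH, hP | hP⟩ := hD.exists_homogeneous_pairs fun x y => y ∈ A x
  · exact ⟨H, hH, hP⟩
  · obtain ⟨x, hx⟩ := (hD.infinite_of_mem hH).nonempty
    obtain ⟨y, ⟨hyH, hyA⟩, hxy⟩ := (hD.infinite_of_mem (inter_mem hH (hA x))).exists_gt x
    exact absurd hyA (hP x hx y hyH hxy)

end IsRamseyUF

lemma RKle.trans {D U W : Ultrafilter ℕ} (hDU : RKle D U) (hUW : RKle U W) : RKle D W := by
  obtain ⟨f, hf⟩ := hDU
  obtain ⟨g, hg⟩ := hUW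
  exact ⟨f ∘ g, fun X => (hf X).trans (hg _)⟩

lemma RKequiv.trans {D U W : Ultrafilter ℕ} (hDU : RKequiv D U) (hUW : RKequiv U W) :
    RKequiv D W :=
  ⟨hDU.1.trans hUW.1, hUW.2.trans hDU.2⟩

lemma RKequiv.symm {D U : Ultrafilter ℕ} (h : RKequiv D U) : RKequiv U D :=
  ⟨h.2, h.1⟩

lemma rkEquiv_map_of_injOn {D : Ultrafilter ℕ} {g : ℕ → ℕ} {H : Set ℕ} (hH : H ∈ D)
    (hg : InjOn g H) : RKequiv D (D.map g) := by
  refine ⟨⟨Function.invFunOn g H, fun Z => ?_⟩, ⟨g, fun Z => Ultrafilter.mem_map⟩⟩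
  rw [Ultrafilter.mem_map]
  refine congr_sets (mem_of_superset hH fun x hx => ?_)
  simp [mem_preimage, hg.leftInvOn_invFunOn hx]

namespace IsRamseyUF

variable {D₁ D₂ : Ultrafilter ℕ}

lemma map_ne_map (h1 : IsRamseyUF D₁) (h2 : IsRamseyUF D₂) (hne : ¬ RKequiv D₁ D₂)
    {g : ℕ → ℕ} (hg : ∀ n, (g ⁻¹' {n}).Finite) : D₁.map g ≠ D₂.map g := by
  intro heq
  obtain ⟨H₁, hH₁, hinj₁⟩ := h1.exists_injOn hg
  obtain ⟨H₂, hH₂, hinj₂⟩ := h2.exists_injOn hg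
  exact hne ((rkEquiv_map_of_injOn hH₁ hinj₁).trans
    (heq ▸ (rkEquiv_map_of_injOn hH₂ hinj₂).symm))

lemma exists_separated (h1 : IsRamseyUF D₁) (h2 : IsRamseyUF D₂) (hne : ¬ RKequiv D₁ D₂)
    {g : ℕ → ℕ} (hg : ∀ n, (g ⁻¹' {n}).Finite) :
    ∃ X ∈ D₁, ∃ Y ∈ D₂, Disjoint X Y ∧ InjOn g (X ∪ Y) := by
  obtain ⟨S, hS₂, hS₁⟩ :=
    Filter.not_le.1 fun hle => map_ne_map h1 h2 hne hg (Ultrafilter.eq_of_le hle)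
  rw [Ultrafilter.mem_coe, ← Ultrafilter.compl_mem_iff_notMem, Ultrafilter.mem_map] at hS₁
  rw [Ultrafilter.mem_coe, Ultrafilter.mem_map] at hS₂
  obtain ⟨H₁, hH₁, hinj₁⟩ := h1.exists_injOn hg
  obtain ⟨H₂, hH₂, hinj₂⟩ := h2.exists_injOn hg
  have hsep : ∀ x ∈ g ⁻¹' Sᶜ ∩ H₁, ∀ y ∈ g ⁻¹' S ∩ H₂, g x ≠ g y :=
    fun x hx y hy hxy => hx.1 (hxy ▸ hy.1)
  have hdisj : Disjoint (g ⁻¹' Sᶜ ∩ H₁) (g ⁻¹' S ∩ H₂) :=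
    Set.disjoint_left.2 fun x hx hy => hsep x hx x hy rfl
  exact ⟨_, inter_mem hS₁ hH₁, _, inter_mem hS₂ hH₂, hdisj, (injOn_union hdisj).2
    ⟨hinj₁.mono inter_subset_right, hinj₂.mono inter_subset_right, hsep⟩⟩

end IsRamseyUF

def IsSparse (G : ℕ → ℕ) (S : Set ℕ) : Prop :=
  ∀ x ∈ S, ∀ y ∈ S, x < y → G x < y

lemma IsSparse.mono {G : ℕ → ℕ} {S T : Set ℕ} (hT : IsSparse G T) (hST : S ⊆ T) :
    IsSparse G S :=
  fun x hx y hy => hT x (hST hx) y (hST hy)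

section Blocks

variable (G : ℕ → ℕ)

def blockStart : ℕ → ℕ
  | 0 => 0
  | k + 1 => blockStart k + G (blockStart k) + 1

def blockIndex (w : ℕ) : ℕ :=
  Nat.findGreatest (fun j => blockStart G j ≤ w) w

lemma blockStart_strictMono : StrictMono (blockStart G) :=
  strictMono_nat_of_lt_succ fun k => by simp only [blockStart]; omega

lemma blockStart_blockIndex_le (w : ℕ) : blockStart G (blockIndex G w) ≤ w :=
  Nat.findGreatest_spec (P := fun j => blockStart G j ≤ w) (Nat.zero_le w) (Nat.zero_le w)

lemma lt_blockStart_blockIndex_succ (w : ℕ) : w < blockStart G (blockIndex G w + 1) := by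
  by_contra! h
  have hle : blockIndex G w + 1 ≤ w := ((blockStart_strictMono G).id_le _).trans h
  exact (Nat.lt_succ_self _).not_ge (Nat.le_findGreatest hle h)

lemma blockIndex_mono : Monotone (blockIndex G) :=
  fun _ _ h => Nat.findGreatest_mono (fun _ hj => hj.trans h) h

lemma finite_blockIndex_add_div_two (r n : ℕ) :
    ((fun w => (blockIndex G w + r) / 2) ⁻¹' {n}).Finite := by
  refine (finite_Iio (blockStart G (2 * n + 2))).subset fun w hw => ?_
  have hw : (blockIndex G w + r) / 2 = n := hw
  exact (lt_blockStart_blockIndex_succ G w).trans_le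
    ((blockStart_strictMono G).monotone (by omega))

/-- Injectivity of both halvings of the block index makes the block indices of distinct
points differ by at least two, and a whole block of length `> G x` then separates them. -/
lemma isSparse_of_injOn {G : ℕ → ℕ} (hG : Monotone G) {S : Set ℕ}
    (h₀ : InjOn (fun w => (blockIndex G w + 0) / 2) S)
    (h₁ : InjOn (fun w => (blockIndex G w + 1) / 2) S) : IsSparse G S := by
  intro x hx y hy hxy
  have hfar : blockIndex G x + 2 ≤ blockIndex G y := by
    have := blockIndex_mono G hxy.le
    have := h₀.ne hx hy hxy.ne
    have := h₁.ne hx hy hxy.ne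
    omega
  calc G x ≤ G (blockStart G (blockIndex G x + 1)) := hG (lt_blockStart_blockIndex_succ G x).le
    _ < blockStart G (blockIndex G x + 2) := by simp only [blockStart]; omega
    _ ≤ blockStart G (blockIndex G y) := (blockStart_strictMono G).monotone hfar
    _ ≤ y := blockStart_blockIndex_le G y

end Blocks

lemma IsRamseyUF.exists_sparse {D₁ D₂ : Ultrafilter ℕ} (h1 : IsRamseyUF D₁)
    (h2 : IsRamseyUF D₂) (hne : ¬ RKequiv D₁ D₂) {G : ℕ → ℕ} (hG : Monotone G) :
    ∃ X ∈ D₁, ∃ Y ∈ D₂, Disjoint X Y ∧ IsSparse G (X ∪ Y) := by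
  obtain ⟨X₀, hX₀, Y₀, hY₀, hdisj, hinj₀⟩ :=
    h1.exists_separated h2 hne (finite_blockIndex_add_div_two G 0)
  obtain ⟨X₁, hX₁, Y₁, hY₁, -, hinj₁⟩ :=
    h1.exists_separated h2 hne (finite_blockIndex_add_div_two G 1)
  refine ⟨X₀ ∩ X₁, inter_mem hX₀ hX₁, Y₀ ∩ Y₁, inter_mem hY₀ hY₁,
    hdisj.mono inter_subset_left inter_subset_left, isSparse_of_injOn hG
      (hinj₀.mono (union_subset_union inter_subset_left inter_subset_left))
      (hinj₁.mono (union_subset_union inter_subset_right inter_subset_right))⟩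

lemma finite_setOf_length_le_forall_le (t : ℕ) :
    {l : List ℕ | l.length ≤ t ∧ ∀ x ∈ l, x ≤ t}.Finite := by
  refine ((List.finite_length_le (Fin (t + 1)) t).image (List.map Fin.val)).subset ?_
  rintro l ⟨hlen, hl⟩
  refine ⟨l.pmap (fun x hx => ⟨x, Nat.lt_succ_of_le hx⟩) hl, by simpa using hlen, ?_⟩
  simp [List.map_pmap]

def LegalAbove (A : List ℕ → Set ℕ) (U : Set ℕ) (β : ℕ → ℕ) : Prop :=
  ∀ t (l : List ℕ), l.length ≤ t → (∀ x ∈ l, x ≤ t) → ∀ w ∈ U, β t < w → w ∈ A l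

lemma LegalAbove.mono {A : List ℕ → Set ℕ} {U : Set ℕ} {β β' : ℕ → ℕ}
    (h : LegalAbove A U β) (hβ : β ≤ β') : LegalAbove A U β' :=
  fun t l hlen hl w hw hlt => h t l hlen hl w hw ((hβ t).trans_lt hlt)

/-- `0` if `S` has no element above `t`. -/
noncomputable def nextIn (S : Set ℕ) (t : ℕ) : ℕ :=
  sInf (S ∩ Ioi t)

section nextIn

variable {S : Set ℕ}

lemma nextIn_mem_inter (hS : S.Infinite) (t : ℕ) : nextIn S t ∈ S ∩ Ioi t :=
  Nat.sInf_mem (hS.exists_gt t)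

lemma nextIn_mem (hS : S.Infinite) (t : ℕ) : nextIn S t ∈ S :=
  (nextIn_mem_inter hS t).1

lemma lt_nextIn (hS : S.Infinite) (t : ℕ) : t < nextIn S t :=
  (nextIn_mem_inter hS t).2

lemma nextIn_mono (hS : S.Infinite) : Monotone (nextIn S) :=
  fun _ t hst => Nat.sInf_le ⟨nextIn_mem hS t, hst.trans_lt (lt_nextIn hS t)⟩

end nextIn

/-- Selectivity diagonalises the countably many sets `⋂ {A l | l bounded by t}`. -/
lemma IsRamseyUF.exists_legalAbove {D : Ultrafilter ℕ} (hD : IsRamseyUF D)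
    (A : List ℕ → Set ℕ) (hA : ∀ l, A l ∈ D) :
    ∃ U ∈ D, ∃ β : ℕ → ℕ, Monotone β ∧ (∀ t, t < β t) ∧ LegalAbove A U β := by
  set bounded := fun t : ℕ => {l : List ℕ | l.length ≤ t ∧ ∀ x ∈ l, x ≤ t}
  obtain ⟨U, hU, hdiag⟩ := hD.exists_diagonal (fun t => ⋂ l ∈ bounded t, A l)
    fun t => (biInter_mem (finite_setOf_length_le_forall_le t)).2 fun l _ => hA l
  have hUinf := hD.infinite_of_mem hU
  refine ⟨U, hU, nextIn U, nextIn_mono hUinf, lt_nextIn hUinf,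
    fun t l hlen hl w hw hlt => ?_⟩
  have hle : t ≤ nextIn U t := (lt_nextIn hUinf t).le
  exact mem_iInter₂.1 (hdiag _ (nextIn_mem hUinf t) w hw hlt) l
    ⟨hlen.trans hle, fun x hx => (hl x hx).trans hle⟩

/-- `k` is strictly increasing, so the history before move `n + 1` is bounded by `k n`. -/
lemma legal_of_lt_threshold {A B : List ℕ → Set ℕ} {U V : Set ℕ} {β k : ℕ → ℕ}
    (hA : LegalAbove A U β) (hB : LegalAbove B V β) (hβ : ∀ t, t < β t)
    (hk₀ : β 0 < k 0) (hk : ∀ n, β (k n) < k (n + 1))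
    (hU : ∀ n, Even n → k n ∈ U) (hV : ∀ n, ¬ Even n → k n ∈ V) (n : ℕ) :
    (Even n → k n ∈ A ((List.range n).map k)) ∧
      (¬ Even n → k n ∈ B ((List.range n).map k)) := by
  have hmono : StrictMono k := strictMono_nat_of_lt_succ fun n => (hβ _).trans (hk n)
  obtain ⟨t, hlen, hle, hlt⟩ : ∃ t, n ≤ t ∧ (∀ i < n, k i ≤ t) ∧ β t < k n := by
    cases n with
    | zero => exact ⟨0, le_rfl, by simp, hk₀⟩
    | succ m =>
      have hkm := hmono.add_le_nat m 0
      have hk₀' := (hβ 0).trans hk₀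
      rw [add_zero] at hkm
      exact ⟨k m, by omega, fun i hi => hmono.monotone (by omega), hk m⟩
  have hlen' : ((List.range n).map k).length ≤ t := by simpa using hlen
  have hle' : ∀ x ∈ (List.range n).map k, x ≤ t := by simpa using hle
  exact ⟨fun he => hA t _ hlen' hle' _ (hU n he) hlt,
    fun ho => hB t _ hlen' hle' _ (hV n ho) hlt⟩

def interleave (a b : ℕ → ℕ) (n : ℕ) : ℕ :=
  if Even n then a (n / 2) else b (n / 2)

@[simp]
lemma interleave_two_mul (a b : ℕ → ℕ) (j : ℕ) : interleave a b (2 * j) = a j := by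
  simp [interleave]

@[simp]
lemma interleave_two_mul_add_one (a b : ℕ → ℕ) (j : ℕ) :
    interleave a b (2 * j + 1) = b j := by
  simp [interleave, show (2 * j + 1) / 2 = j by omega]

def prevTerm (z : ℕ → ℕ) : ℕ → ℕ
  | 0 => 0
  | j + 1 => z j

section Rounds

variable (U V X : Set ℕ) (β z : ℕ → ℕ)

/-- How far the next element of `X ∪ Y` must lie above the current one, so that there is
room for a padding move in between. -/
noncomputable def roundBound (t : ℕ) : ℕ :=
  β (nextIn U (β (nextIn V (β t))))

/- Round `j` is the pair of moves `2j, 2j+1`; the element `z j` of `X ∪ Y` is played at the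
position of its parity, the other position is padded by the next element of `U` or `V`
clearing the threshold. -/
open Classical in
noncomputable def evenMove (j : ℕ) : ℕ :=
  if z j ∈ X then z j else nextIn U (β (nextIn V (β (prevTerm z j))))

open Classical in
noncomputable def oddMove (j : ℕ) : ℕ :=
  if z j ∈ X then nextIn V (β (z j)) else z j

variable {U V X β z}

lemma lt_evenMove (hU : U.Infinite) (hβ : Monotone β) (hβid : ∀ t, t < β t)
    (hz : ∀ j, roundBound U V β (prevTerm z j) < z j) (j : ℕ) :
    β (nextIn V (β (prevTerm z j))) < evenMove U V X β z j := by
  unfold evenMove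
  split_ifs
  · exact (hβ ((hβid _).trans (lt_nextIn hU _)).le).trans_lt (hz j)
  · exact lt_nextIn hU _

lemma lt_oddMove (hV : V.Infinite) (hz : ∀ j, roundBound U V β (prevTerm z j) < z j)
    (j : ℕ) : β (evenMove U V X β z j) < oddMove V X β z j := by
  unfold evenMove oddMove
  split_ifs
  · exact lt_nextIn hV _
  · exact hz j

lemma oddMove_le (hV : V.Infinite) (hβid : ∀ t, t < β t) (j : ℕ) :
    oddMove V X β z j ≤ nextIn V (β (z j)) := by
  unfold oddMove
  split_ifs
  · exact le_rfl
  · exact ((hβid _).trans (lt_nextIn hV _)).le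

end Rounds

lemma exists_run_of_legalAbove {A B : List ℕ → Set ℕ} {U V : Set ℕ} {β : ℕ → ℕ}
    (hA : LegalAbove A U β) (hB : LegalAbove B V β) (hU : U.Infinite) (hV : V.Infinite)
    (hβ : Monotone β) (hβid : ∀ t, t < β t) :
    ∃ G : ℕ → ℕ, Monotone G ∧ ∀ X ⊆ U, ∀ Y ⊆ V, Disjoint X Y → (X ∪ Y).Infinite →
      (∀ w ∈ X ∪ Y, G 0 < w) → IsSparse G (X ∪ Y) →
      ∃ k : ℕ → ℕ,
        (∀ n, (Even n → k n ∈ A ((List.range n).map k)) ∧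
          (¬ Even n → k n ∈ B ((List.range n).map k))) ∧
        X ⊆ {m | ∃ i, k (2 * i) = m} ∧ Y ⊆ {m | ∃ i, k (2 * i + 1) = m} := by
  refine ⟨roundBound U V β, hβ.comp ((nextIn_mono hU).comp (hβ.comp ((nextIn_mono hV).comp hβ))),
    fun X hXU Y hYV hXY hinf hpos hsparse => ?_⟩
  set z := Nat.nth (· ∈ X ∪ Y)
  have hz_mem : ∀ j, z j ∈ X ∪ Y := Nat.nth_mem_of_infinite hinf
  have hz : ∀ j, roundBound U V β (prevTerm z j) < z j := by
    rintro (_ | j)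
    · exact hpos _ (hz_mem 0)
    · exact hsparse _ (hz_mem j) _ (hz_mem _) (Nat.nth_strictMono hinf j.lt_succ_self)
  set a := evenMove U V X β z
  set b := oddMove V X β z
  have ha : ∀ j, a j ∈ U := fun j => by
    unfold a evenMove; split_ifs with h
    exacts [hXU h, nextIn_mem hU _]
  have hb : ∀ j, b j ∈ V := fun j => by
    unfold b oddMove; split_ifs with h
    exacts [nextIn_mem hV _, hYV ((hz_mem j).resolve_left h)]
  refine ⟨interleave a b, legal_of_lt_threshold hA hB hβid ?_ ?_ ?_ ?_, ?_, ?_⟩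
  · simpa [interleave] using (hβ (Nat.zero_le _)).trans_lt (lt_evenMove hU hβ hβid hz 0)
  · intro n
    obtain ⟨j, rfl | rfl⟩ := Nat.even_or_odd' n
    · simpa using lt_oddMove (X := X) hV hz j
    · simpa [show 2 * j + 1 + 1 = 2 * (j + 1) by ring] using
        (hβ (oddMove_le hV hβid j)).trans_lt (lt_evenMove hU hβ hβid hz (j + 1))
  · rintro n ⟨j, rfl⟩
    simpa [← two_mul] using ha j
  · intro n hn
    obtain ⟨j, rfl | rfl⟩ := Nat.even_or_odd' n
    · exact absurd (even_two_mul j) hn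
    · simpa using hb j
  · intro x hx
    obtain ⟨j, rfl⟩ : x ∈ Set.range z := (Nat.range_nth_of_infinite hinf).symm ▸ Or.inl hx
    exact ⟨j, by simp [a, evenMove, hx]⟩
  · intro y hy
    obtain ⟨j, rfl⟩ : y ∈ Set.range z := (Nat.range_nth_of_infinite hinf).symm ▸ Or.inr hy
    exact ⟨j, by simp [b, oddMove, hXY.notMem_of_mem_right hy]⟩

/-- If `D₁, D₂` are Ramsey ultrafilters that are not RK-equivalent, then player I
has no winning strategy in the game `G(D₁, D₂)`: for every strategy `σ` of
player I (a function assigning to each finite sequence of player II's previous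
moves a pair in `D₁ × D₂`) there is a sequence `k` of moves of player II that
keeps the rules (`k n` lies in the first component of I's move when `n` is even,
in the second when `n` is odd) and wins, i.e. `{k 2i : i < ω} ∈ D₁` and
`{k (2i+1) : i < ω} ∈ D₂`. -/
theorem playerI_no_winning_strategy (D₁ D₂ : Ultrafilter ℕ)
    (h1 : IsRamseyUF D₁) (h2 : IsRamseyUF D₂) (hne : ¬ RKequiv D₁ D₂)
    (σ : List ℕ → Set ℕ × Set ℕ)
    (hσ : ∀ l : List ℕ, (σ l).1 ∈ D₁ ∧ (σ l).2 ∈ D₂) :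
    ∃ k : ℕ → ℕ,
      (∀ n : ℕ,
        (Even n → k n ∈ (σ ((List.range n).map k)).1) ∧
        (¬ Even n → k n ∈ (σ ((List.range n).map k)).2)) ∧
      {m | ∃ i : ℕ, k (2 * i) = m} ∈ D₁ ∧
      {m | ∃ i : ℕ, k (2 * i + 1) = m} ∈ D₂ := by
  obtain ⟨U, hU, β₁, hβ₁, hβ₁id, hA⟩ := h1.exists_legalAbove _ fun l => (hσ l).1
  obtain ⟨V, hV, β₂, hβ₂, -, hB⟩ := h2.exists_legalAbove _ fun l => (hσ l).2
  obtain ⟨G, hG, hrun⟩ := exists_run_of_legalAbove (hA.mono le_sup_left)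
    (hB.mono le_sup_right) (h1.infinite_of_mem hU) (h2.infinite_of_mem hV) (hβ₁.sup hβ₂)
    fun t => (hβ₁id t).trans_le le_sup_left
  obtain ⟨X, hX, Y, hY, hXY, hsparse⟩ := h1.exists_sparse h2 hne hG
  have hX' : X ∩ U ∩ Ioi (G 0) ∈ D₁ := inter_mem (inter_mem hX hU) (h1.Ioi_mem _)
  have hY' : Y ∩ V ∩ Ioi (G 0) ∈ D₂ := inter_mem (inter_mem hY hV) (h2.Ioi_mem _)
  obtain ⟨k, hlegal, hXk, hYk⟩ := hrun (X ∩ U ∩ Ioi (G 0)) (fun _ h => h.1.2)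
    (Y ∩ V ∩ Ioi (G 0)) (fun _ h => h.1.2)
    (hXY.mono (fun _ h => h.1.1) (fun _ h => h.1.1))
    ((h1.infinite_of_mem hX').mono subset_union_left)
    (fun w hw => hw.elim (·.2) (·.2))
    (hsparse.mono (union_subset_union (fun _ h => h.1.1) (fun _ h => h.1.1)))
  exact ⟨k, hlegal, mem_of_superset hX' hXk, mem_of_superset hY' hYk⟩
end

section
/- Let ⟨a_k : k < ω⟩ be a partition of ℕ into pairwise disjoint sets with union ℕ, and let X ⊆ ℕ be such that X ∩ a_k is finite for every k. Let f : ℕ → ℕ be strictly increasing with f(0) = 0 and such that for all n and k, if a_k ∩ [0, f(n)) ≠ ∅ then X ∩ a_k ⊆ [0, f(n+1)). Let g : ℕ → ℕ be strictly increasing with g(0) = 0 and such that for every n the interval [g(n), g(n+1)) contains at least one element of the range of f. Fix i ∈ {0, 1, 2} and let Z be a subset of X ∩ ⋃_{n<ω} [g(3n+i), g(3n+i+1)) such that Z ∩ [g(n), g(n+1)) has at most one element for every n. Then Z ∩ a_k has at most one element for every k. -/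
open Set

/-!
A point `y ∈ X` lying in the same piece `a k` as a point `x < g (j + 1)` satisfies
`y < g (j + 3)`: the intervals `[g (j + 1), g (j + 2))` and `[g (j + 2), g (j + 3))` contain
values `f m₁ < f m₂`, and `x < f m₁` forces `y < f (m₁ + 1) ≤ f m₂`. Two points of `Z` in the
same piece can therefore not lie in different blocks of the residue class `i`, since those are
at least three `g`-intervals apart; in the same block they coincide, as `Z` meets each
`g`-interval at most once.
-/

section

variable {a : ℕ → Set ℕ} {X : Set ℕ} {f g : ℕ → ℕ}

theorem lt_of_mem_piece_of_lt_interval (hf : StrictMono f)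
    (hfa : ∀ n k, (a k ∩ Iio (f n)).Nonempty → X ∩ a k ⊆ Iio (f (n + 1)))
    (hgf : ∀ n, ∃ m, f m ∈ Ico (g n) (g (n + 1)))
    {k j x y : ℕ} (hx : x ∈ a k) (hxj : x < g (j + 1)) (hy : y ∈ X ∩ a k) :
    y < g (j + 3) := by
  obtain ⟨m₁, hm₁g, hm₁g'⟩ := hgf (j + 1)
  obtain ⟨m₂, hm₂g, hm₂g'⟩ := hgf (j + 2)
  have hm : m₁ < m₂ := hf.lt_iff_lt.mp (hm₁g'.trans_le hm₂g)
  have hy' : y < f (m₁ + 1) := hfa m₁ k ⟨x, hx, hxj.trans_le hm₁g⟩ hy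
  calc y < f (m₁ + 1) := hy'
    _ ≤ f m₂ := hf.monotone hm
    _ < g (j + 3) := hm₂g'

theorem block_index_le_of_mem_piece (hf : StrictMono f)
    (hfa : ∀ n k, (a k ∩ Iio (f n)).Nonempty → X ∩ a k ⊆ Iio (f (n + 1)))
    (hg : StrictMono g) (hgf : ∀ n, ∃ m, f m ∈ Ico (g n) (g (n + 1)))
    {i k n m x y : ℕ} (hx : x ∈ a k) (hy : y ∈ X ∩ a k)
    (hxn : x ∈ Ico (g (3 * n + i)) (g (3 * n + i + 1)))
    (hym : y ∈ Ico (g (3 * m + i)) (g (3 * m + i + 1))) :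
    m ≤ n := by
  by_contra! hnm
  have hy_lt : y < g (3 * n + i + 3) := lt_of_mem_piece_of_lt_interval hf hfa hgf hx hxn.2 hy
  have hy_ge : g (3 * n + i + 3) ≤ y := (hg.monotone (by omega)).trans hym.1
  exact hy_lt.not_ge hy_ge

end

theorem selector_meets_pieces_once_general (a : ℕ → Set ℕ)
    (X : Set ℕ)
    (f : ℕ → ℕ) (hf : StrictMono f)
    (hfa : ∀ n k, (a k ∩ Set.Iio (f n)).Nonempty → X ∩ a k ⊆ Set.Iio (f (n + 1)))
    (g : ℕ → ℕ) (hg : StrictMono g)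
    (hgf : ∀ n, ∃ m, f m ∈ Set.Ico (g n) (g (n + 1)))
    (i : ℕ)
    (Z : Set ℕ)
    (hZ : Z ⊆ X ∩ ⋃ n, Set.Ico (g (3 * n + i)) (g (3 * n + i + 1)))
    (hZ1 : ∀ n, (Z ∩ Set.Ico (g n) (g (n + 1))).Subsingleton) :
    ∀ k, (Z ∩ a k).Subsingleton := by
  rintro k x ⟨hxZ, hxk⟩ y ⟨hyZ, hyk⟩
  obtain ⟨hxX, hxU⟩ := hZ hxZ
  obtain ⟨hyX, hyU⟩ := hZ hyZ
  obtain ⟨n, hxn⟩ := mem_iUnion.mp hxU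
  obtain ⟨m, hym⟩ := mem_iUnion.mp hyU
  have hmn : m ≤ n := block_index_le_of_mem_piece hf hfa hg hgf hxk ⟨hyX, hyk⟩ hxn hym
  have hnm : n ≤ m := block_index_le_of_mem_piece hf hfa hg hgf hyk ⟨hxX, hxk⟩ hym hxn
  obtain rfl : n = m := le_antisymm hnm hmn
  exact hZ1 (3 * n + i) ⟨hxZ, hxn⟩ ⟨hyZ, hym⟩

/-- The combinatorial core of the proof of Lemma 1.1: given a partition
`⟨a k : k < ω⟩` of `ℕ`, a set `X` meeting every piece finitely, a strictly
increasing `f` capturing the pieces between consecutive values, a strictly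
increasing `g` whose consecutive intervals each meet the range of `f`, and a set
`Z ⊆ X` contained in the blocks `[g(3n+i), g(3n+i+1))` of one residue class
`i ∈ {0,1,2}` and meeting each interval `[g(n), g(n+1))` at most once, the set
`Z` meets every piece `a k` in at most one point. -/
theorem selector_meets_pieces_once (a : ℕ → Set ℕ)
    (hdisj : ∀ k l : ℕ, k ≠ l → Disjoint (a k) (a l))
    (hcover : (⋃ k, a k) = Set.univ)
    (X : Set ℕ) (hX : ∀ k, (X ∩ a k).Finite)
    (f : ℕ → ℕ) (hf : StrictMono f) (hf0 : f 0 = 0)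
    (hfa : ∀ n k, (a k ∩ Set.Iio (f n)).Nonempty → X ∩ a k ⊆ Set.Iio (f (n + 1)))
    (g : ℕ → ℕ) (hg : StrictMono g) (hg0 : g 0 = 0)
    (hgf : ∀ n, ∃ m, f m ∈ Set.Ico (g n) (g (n + 1)))
    (i : ℕ) (hi : i ≤ 2)
    (Z : Set ℕ)
    (hZ : Z ⊆ X ∩ ⋃ n, Set.Ico (g (3 * n + i)) (g (3 * n + i + 1)))
    (hZ1 : ∀ n, (Z ∩ Set.Ico (g n) (g (n + 1))).Subsingleton) :
    ∀ k, (Z ∩ a k).Subsingleton :=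
  selector_meets_pieces_once_general a X f hf hfa g hg hgf i Z hZ hZ1
end
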